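/- For a connected weighted graph with resistance matrix Ω and node resistance curvature vector p, the vector Ω·p is a constant multiple of the all-ones vector u; precisely, Ω·p = 2σ²·u, where σ² := (1/2)·pᵀΩp. -/

import Mathlib

open Matrix

variable {V : Type*}

/- The weighted Laplacian matrix of a weighted graph `(V, G, c)`:
`Q i i = ∑_{k ∼ i} c i k`, `Q i j = -c i j` for links `i ∼ j`, and `0` otherwise. -/
open Classical in
noncomputable def lapMatrix [Fintype V] (G : SimpleGraph V) (c : V → V → ℝ) :
    Matrix V V ℝ :=
  Matrix.of fun i j =>
    if i = j then ∑ k, if G.Adj i k then c i k else 0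
    else if G.Adj i j then -c i j else 0

/- The four Penrose equations characterizing the Moore–Penrose pseudoinverse. -/
def IsMoorePenroseInv [Fintype V] (Q Qd : Matrix V V ℝ) : Prop :=
  Q * Qd * Q = Q ∧ Qd * Q * Qd = Qd ∧ (Q * Qd)ᵀ = Q * Qd ∧ (Qd * Q)ᵀ = Qd * Q

/- The effective resistance `ω i j = (e_i - e_j)ᵀ Q† (e_i - e_j)`, computed from a
pseudoinverse `Qd` of the Laplacian. -/
open Classical in
noncomputable def effRes [Fintype V] (Qd : Matrix V V ℝ) (i j : V) : ℝ :=
  (Pi.single i 1 - Pi.single j 1) ⬝ᵥ Qd *ᵥ (Pi.single i 1 - Pi.single j 1)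

/- The node resistance curvature `p i = 1 - (1/2) ∑_{j ∼ i} c i j * ω i j`. -/
open Classical in
noncomputable def nodeCurv [Fintype V] (G : SimpleGraph V) (c : V → V → ℝ)
    (Qd : Matrix V V ℝ) (i : V) : ℝ :=
  1 - 1 / 2 * ∑ j, if G.Adj i j then c i j * effRes Qd i j else 0

/- The resistance matrix `Ω` with entries `(Ω) i j = ω i j`. -/
noncomputable def resMatrix [Fintype V] (Qd : Matrix V V ℝ) : Matrix V V ℝ :=
  Matrix.of fun i j => effRes Qd i j

set_option linter.unusedSectionVars false

section Aux

variable [Fintype V] [DecidableEq V]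

/-- Uniqueness of the Moore–Penrose pseudoinverse. -/
lemma mp_unique {A B C : Matrix V V ℝ}
    (hB : IsMoorePenroseInv A B) (hC : IsMoorePenroseInv A C) : B = C := by
  obtain ⟨hB1, hB2, hB3, hB4⟩ := hB
  obtain ⟨hC1, hC2, hC3, hC4⟩ := hC
  have hAB : A * B = A * C := by
    calc A * B = (A * B)ᵀ := hB3.symm
      _ = Bᵀ * Aᵀ := transpose_mul _ _
      _ = Bᵀ * (A * C * A)ᵀ := by rw [hC1]
      _ = Bᵀ * (Aᵀ * (A * C)ᵀ) := by rw [transpose_mul (A * C) A]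
      _ = (Bᵀ * Aᵀ) * (A * C)ᵀ := (Matrix.mul_assoc _ _ _).symm
      _ = (A * B)ᵀ * (A * C)ᵀ := by rw [← transpose_mul]
      _ = (A * B) * (A * C) := by rw [hB3, hC3]
      _ = (A * B * A) * C := (Matrix.mul_assoc (A * B) A C).symm
      _ = A * C := by rw [hB1]
  have hBA : B * A = C * A := by
    calc B * A = (B * A)ᵀ := hB4.symm
      _ = Aᵀ * Bᵀ := transpose_mul _ _
      _ = (A * (C * A))ᵀ * Bᵀ := by rw [← Matrix.mul_assoc A C A, hC1]
      _ = ((C * A)ᵀ * Aᵀ) * Bᵀ := by rw [transpose_mul A (C * A)]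
      _ = (C * A)ᵀ * (Aᵀ * Bᵀ) := Matrix.mul_assoc _ _ _
      _ = (C * A)ᵀ * (B * A)ᵀ := by rw [← transpose_mul]
      _ = (C * A) * (B * A) := by rw [hB4, hC4]
      _ = C * (A * B * A) := by rw [Matrix.mul_assoc C A (B * A), ← Matrix.mul_assoc A B A]
      _ = C * A := by rw [hB1]
  calc B = B * A * B := hB2.symm
    _ = C * A * B := by rw [hBA]
    _ = C * (A * B) := Matrix.mul_assoc _ _ _
    _ = C * (A * C) := by rw [hAB]
    _ = C * A * C := (Matrix.mul_assoc _ _ _).symm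
    _ = C := hC2

variable (G : SimpleGraph V) (c : V → V → ℝ)

open scoped Classical

lemma lap_symm (hsymm : ∀ i j, c i j = c j i) (i j : V) :
    lapMatrix G c i j = lapMatrix G c j i := by
  by_cases h : i = j
  · subst h; rfl
  · simp only [lapMatrix, of_apply, if_neg h, if_neg (Ne.symm h)]
    by_cases hadj : G.Adj i j
    · rw [if_pos hadj, if_pos hadj.symm, hsymm]
    · rw [if_neg hadj, if_neg (fun h' => hadj h'.symm)]

lemma lap_rowsum (i : V) : ∑ j, lapMatrix G c i j = 0 := by
  rw [← Finset.sum_erase_add _ _ (Finset.mem_univ i)]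
  have h1 : ∑ j ∈ Finset.univ.erase i, lapMatrix G c i j
      = ∑ j ∈ Finset.univ.erase i, -(if G.Adj i j then c i j else 0) := by
    apply Finset.sum_congr rfl
    intro j hj
    have hne : j ≠ i := Finset.ne_of_mem_erase hj
    simp only [lapMatrix, of_apply, if_neg (Ne.symm hne)]
    by_cases hadj : G.Adj i j <;> simp [hadj]
  have h2 : lapMatrix G c i i = ∑ k, if G.Adj i k then c i k else 0 := by
    simp [lapMatrix]
  rw [h1, h2, Finset.sum_neg_distrib, Finset.sum_erase _ (by simp)]
  ring

lemma lap_quad (hsymm : ∀ i j, c i j = c j i) (x : V → ℝ) :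
    x ⬝ᵥ lapMatrix G c *ᵥ x =
      1 / 2 * ∑ i, ∑ j, (if G.Adj i j then c i j else 0) * (x i - x j) ^ 2 := by
  set a : V → V → ℝ := fun i j => if G.Adj i j then c i j else 0 with ha
  have ha0 : ∀ i, a i i = 0 := fun i => by simp [ha]
  have hasymm : ∀ i j, a i j = a j i := by
    intro i j
    by_cases h : G.Adj i j
    · simp [ha, h, h.symm, hsymm i j]
    · have h' : ¬ G.Adj j i := fun h' => h h'.symm
      simp [ha, h, h']
  have hQ : ∀ i j, lapMatrix G c i j = (if i = j then ∑ k, a i k else 0) - a i j := by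
    intro i j
    by_cases h : i = j
    · subst h; simp [lapMatrix, ha0 i, ha]
    · by_cases hadj : G.Adj i j <;> simp [lapMatrix, h, hadj, ha]
  have lhs : x ⬝ᵥ lapMatrix G c *ᵥ x
      = (∑ i, ∑ k, a i k * x i ^ 2) - ∑ i, ∑ j, a i j * (x i * x j) := by
    simp only [dotProduct, mulVec]
    rw [← Finset.sum_sub_distrib]
    apply Finset.sum_congr rfl
    intro i _
    have hrow : ∑ j, lapMatrix G c i j * x j
        = (∑ k, a i k) * x i - ∑ j, a i j * x j := by
      calc ∑ j, lapMatrix G c i j * x j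
          = ∑ j, ((if i = j then ∑ k, a i k else 0) * x j - a i j * x j) := by
            apply Finset.sum_congr rfl; intro j _; rw [hQ i j]; ring
        _ = (∑ j, (if i = j then ∑ k, a i k else 0) * x j) - ∑ j, a i j * x j := by
            rw [Finset.sum_sub_distrib]
        _ = (∑ k, a i k) * x i - ∑ j, a i j * x j := by
            congr 1
            simp only [ite_mul, zero_mul, Finset.sum_ite_eq, Finset.mem_univ, if_true]
    rw [hrow, mul_sub]
    congr 1
    · rw [Finset.sum_mul, Finset.mul_sum]
      exact Finset.sum_congr rfl fun k _ => by ring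
    · rw [Finset.mul_sum]
      exact Finset.sum_congr rfl fun j _ => by ring
  have hswap : ∑ i, ∑ j, a i j * x j ^ 2 = ∑ i, ∑ j, a i j * x i ^ 2 := by
    rw [Finset.sum_comm]
    exact Finset.sum_congr rfl fun i _ => Finset.sum_congr rfl fun j _ => by rw [hasymm]
  have rhs : ∑ i, ∑ j, a i j * (x i - x j) ^ 2
      = (∑ i, ∑ j, a i j * x i ^ 2) + (∑ i, ∑ j, a i j * x j ^ 2)
        - 2 * ∑ i, ∑ j, a i j * (x i * x j) := by
    have hrow : ∀ i, ∑ j, a i j * (x i - x j) ^ 2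
        = (∑ j, a i j * x i ^ 2) + (∑ j, a i j * x j ^ 2) - 2 * ∑ j, a i j * (x i * x j) := by
      intro i
      rw [Finset.mul_sum, ← Finset.sum_add_distrib, ← Finset.sum_sub_distrib]
      apply Finset.sum_congr rfl; intro j _; ring
    rw [Finset.sum_congr rfl fun i _ => hrow i]
    rw [Finset.mul_sum, ← Finset.sum_add_distrib, ← Finset.sum_sub_distrib]
  rw [lhs, rhs, hswap]
  ring

lemma lap_ker (hsymm : ∀ i j, c i j = c j i)
    (hpos : ∀ i j, G.Adj i j → 0 < c i j) (hconn : G.Connected)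
    (x : V → ℝ) (hx : lapMatrix G c *ᵥ x = 0) (i j : V) : x i = x j := by
  have hquad : x ⬝ᵥ lapMatrix G c *ᵥ x = 0 := by rw [hx, dotProduct_zero]
  rw [lap_quad G c hsymm x] at hquad
  have hnn : ∀ i j : V, 0 ≤ (if G.Adj i j then c i j else 0) * (x i - x j) ^ 2 := by
    intro i j
    apply mul_nonneg
    · by_cases h : G.Adj i j
      · rw [if_pos h]; exact (hpos i j h).le
      · rw [if_neg h]
    · positivity
  have hsum : ∑ i, ∑ j, (if G.Adj i j then c i j else 0) * (x i - x j) ^ 2 = 0 := by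
    linarith
  have hterm : ∀ i j : V, (if G.Adj i j then c i j else 0) * (x i - x j) ^ 2 = 0 := by
    intro i j
    have houter := (Finset.sum_eq_zero_iff_of_nonneg
      (fun i _ => Finset.sum_nonneg fun j _ => hnn i j)).mp hsum i (Finset.mem_univ i)
    exact (Finset.sum_eq_zero_iff_of_nonneg (fun j _ => hnn i j)).mp houter j (Finset.mem_univ j)
  have hadj : ∀ a b : V, G.Adj a b → x a = x b := by
    intro a b hab
    have h := hterm a b
    rw [if_pos hab] at h
    rcases mul_eq_zero.mp h with h' | h'
    · exact absurd h' (ne_of_gt (hpos a b hab))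
    · have := pow_eq_zero_iff (n := 2) (by norm_num) |>.mp h'
      linarith [sub_eq_zero.mp this]
  obtain ⟨w⟩ := hconn.preconnected i j
  induction w with
  | nil => rfl
  | cons h p ih => exact (hadj _ _ h).trans ih

lemma effRes_self (Qd : Matrix V V ℝ) (a : V) : effRes Qd a a = 0 := by
  simp [effRes]

lemma nodeCurv_eq (Qd : Matrix V V ℝ) (a : V) :
    nodeCurv G c Qd a = 1 + 1 / 2 * ∑ j, lapMatrix G c a j * effRes Qd a j := by
  simp only [nodeCurv]
  have key : (∑ j, if G.Adj a j then c a j * effRes Qd a j else 0)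
      = -∑ j, lapMatrix G c a j * effRes Qd a j := by
    rw [← Finset.sum_neg_distrib]
    refine Finset.sum_congr rfl fun j _ => ?_
    by_cases h : a = j
    · subst h
      rw [if_neg (G.irrefl), effRes_self, mul_zero, neg_zero]
    · by_cases hadj : G.Adj a j
      · rw [if_pos hadj]
        have hQ : lapMatrix G c a j = -c a j := by simp [lapMatrix, h, hadj]
        rw [hQ]; ring
      · rw [if_neg hadj]
        have hQ : lapMatrix G c a j = 0 := by simp [lapMatrix, h, hadj]
        rw [hQ]; ring
  rw [key]; ring

end Aux

/- STATEMENT 15: `Ω p = 2 σ² u` where `σ² = (1/2) pᵀ Ω p`. -/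
theorem resMatrix_mulVec_nodeCurv
    [Fintype V] [DecidableEq V] (G : SimpleGraph V) [DecidableRel G.Adj]
    (c : V → V → ℝ) (hsymm : ∀ i j, c i j = c j i)
    (hpos : ∀ i j, G.Adj i j → 0 < c i j)
    (hconn : G.Connected)
    (Qd : Matrix V V ℝ) (hQd : IsMoorePenroseInv (lapMatrix G c) Qd) :
    ∀ x : V,
      (resMatrix Qd *ᵥ fun i => nodeCurv G c Qd i) x =
        2 * (1 / 2 *
          ((fun i => nodeCurv G c Qd i) ⬝ᵥ resMatrix Qd *ᵥ fun i => nodeCurv G c Qd i)) := by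
  obtain ⟨h1, h2, h3, h4⟩ := hQd
  haveI hNe : Nonempty V := hconn.nonempty
  set n : ℝ := (Fintype.card V : ℝ) with hn
  have hn0 : n ≠ 0 := by
    rw [hn]
    exact Nat.cast_ne_zero.mpr Fintype.card_ne_zero
  set Q : Matrix V V ℝ := lapMatrix G c with hQdef
  have hQsymm : Qᵀ = Q := by
    ext i j
    rw [transpose_apply]
    exact lap_symm G c hsymm j i
  have hmp' : IsMoorePenroseInv Q Qdᵀ := by
    refine ⟨?_, ?_, ?_, ?_⟩
    · have e := congrArg Matrix.transpose h1
      rw [transpose_mul, transpose_mul, hQsymm, ← Matrix.mul_assoc] at e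
      exact e
    · have e := congrArg Matrix.transpose h2
      rw [transpose_mul, transpose_mul, hQsymm, ← Matrix.mul_assoc] at e
      exact e
    · calc (Q * Qdᵀ)ᵀ = Qdᵀᵀ * Qᵀ := transpose_mul _ _
        _ = Qd * Q := by rw [transpose_transpose, hQsymm]
        _ = (Qd * Q)ᵀ := h4.symm
        _ = Qᵀ * Qdᵀ := transpose_mul _ _
        _ = Q * Qdᵀ := by rw [hQsymm]
    · calc (Qdᵀ * Q)ᵀ = Qᵀ * Qdᵀᵀ := transpose_mul _ _
        _ = Q * Qd := by rw [transpose_transpose, hQsymm]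
        _ = (Q * Qd)ᵀ := h3.symm
        _ = Qdᵀ * Qᵀ := transpose_mul _ _
        _ = Qdᵀ * Q := by rw [hQsymm]
  have hQdsymm : Qdᵀ = Qd := mp_unique hmp' ⟨h1, h2, h3, h4⟩
  have hQdij : ∀ a b, Qd a b = Qd b a := by
    intro a b
    have h := Matrix.ext_iff.mpr hQdsymm b a
    rw [transpose_apply] at h
    exact h
  have hQrow : ∀ i, ∑ j, Q i j = 0 := fun i => lap_rowsum G c i
  have hQcol : ∀ j, ∑ i, Q i j = 0 := by
    intro j
    calc ∑ i, Q i j = ∑ i, Q j i := Finset.sum_congr rfl fun i _ => lap_symm G c hsymm i j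
      _ = 0 := hQrow j
  have hQP : Q * (Qd * Q) = Q := by rw [← Matrix.mul_assoc]; exact h1
  have hPP : Qd * Q = Q * Qd := by
    calc Qd * Q = (Qd * Q)ᵀ := h4.symm
      _ = Qᵀ * Qdᵀ := transpose_mul _ _
      _ = Q * Qd := by rw [hQsymm, hQdsymm]
  have hProw : ∀ i, ∑ j, (Qd * Q) i j = 0 := by
    intro i
    simp only [Matrix.mul_apply]
    rw [Finset.sum_comm]
    apply Finset.sum_eq_zero
    intro k _
    rw [← Finset.mul_sum, hQrow, mul_zero]
  have hPcol : ∀ j, ∑ i, (Qd * Q) i j = 0 := by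
    intro j
    rw [hPP]
    simp only [Matrix.mul_apply]
    rw [Finset.sum_comm]
    apply Finset.sum_eq_zero
    intro k _
    rw [← Finset.sum_mul, hQcol, zero_mul]
  have hPentry : ∀ i j, (Qd * Q) i j = (if i = j then 1 else 0) - 1 / n := by
    intro i0 j
    set y : V → ℝ := fun i => (if i = j then (1:ℝ) else 0) - (Qd * Q) i j with hy
    have hyker : Q *ᵥ y = 0 := by
      funext i
      have h5 : ∑ k, Q i k * (Qd * Q) k j = Q i j := by
        rw [← Matrix.mul_apply, hQP]
      simp only [hy, mulVec, dotProduct, Pi.zero_apply, mul_sub]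
      rw [Finset.sum_sub_distrib, h5]
      simp [mul_ite, Finset.sum_ite_eq']
    have hyconst := lap_ker G c hsymm hpos hconn y hyker
    have hysum : ∑ i, y i = 1 := by
      simp only [hy]
      rw [Finset.sum_sub_distrib, hPcol j]
      simp [Finset.sum_ite_eq']
    have hcard : ∑ _i : V, y i0 = n * y i0 := by
      rw [Finset.sum_const, Finset.card_univ, nsmul_eq_mul, hn]
    have hval : n * y i0 = 1 := by
      rw [← hcard, ← hysum]
      exact Finset.sum_congr rfl fun i _ => hyconst i0 i
    have hyval : y i0 = 1 / n := by
      rw [eq_div_iff hn0, mul_comm]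
      exact hval
    simp only [hy] at hyval
    linarith [hyval]
  have hQdrow : ∀ i, ∑ j, Qd i j = 0 := by
    intro i
    have hQQd : Qd = Qd * (Q * Qd) := by rw [← Matrix.mul_assoc]; exact h2.symm
    have hPr : ∀ k, ∑ j, (Q * Qd) k j = 0 := by
      intro k; rw [← hPP]; exact hProw k
    calc ∑ j, Qd i j = ∑ j, (Qd * (Q * Qd)) i j := by rw [← hQQd]
      _ = 0 := by
        have hm : ∀ j, (Qd * (Q * Qd)) i j = ∑ k, Qd i k * (Q * Qd) k j :=
          fun j => Matrix.mul_apply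
        rw [Finset.sum_congr rfl fun j _ => hm j, Finset.sum_comm]
        apply Finset.sum_eq_zero
        intro k _
        rw [← Finset.mul_sum, hPr k, mul_zero]
  have hω : ∀ a b, effRes Qd a b = Qd a a + Qd b b - 2 * Qd a b := by
    intro a b
    simp only [effRes, Matrix.mulVec_sub, Matrix.mulVec_single_one, sub_dotProduct,
      dotProduct_sub, single_dotProduct, Pi.sub_apply, Matrix.col_apply, mul_one, one_mul]
    rw [hQdij b a]
    ring
  have hp : ∀ a, nodeCurv G c Qd a = 1 / 2 * (∑ k, Q a k * Qd k k) + 1 / n := by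
    intro a
    rw [nodeCurv_eq G c Qd a, ← hQdef]
    have e1 : ∀ j, Q a j * effRes Qd a j
        = Q a j * Qd a a + Q a j * Qd j j - 2 * (Q a j * Qd j a) := by
      intro j; rw [hω a j, hQdij a j]; ring
    rw [Finset.sum_congr rfl fun j _ => e1 j]
    rw [Finset.sum_sub_distrib, Finset.sum_add_distrib, ← Finset.sum_mul, hQrow a,
      zero_mul, zero_add]
    have h6 : ∑ j, Q a j * Qd j a = 1 - 1 / n := by
      rw [show ∑ j, Q a j * Qd j a = (Q * Qd) a a from (Matrix.mul_apply).symm,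
        ← hPP, hPentry a a, if_pos rfl]
    have h7 : ∑ j, 2 * (Q a j * Qd j a) = 2 * (1 - 1 / n) := by
      rw [← Finset.mul_sum, h6]
    rw [h7]
    ring
  have hpsum : ∑ j, nodeCurv G c Qd j = 1 := by
    rw [Finset.sum_congr rfl fun j _ => hp j]
    rw [Finset.sum_add_distrib, ← Finset.mul_sum, Finset.sum_const, Finset.card_univ,
      nsmul_eq_mul]
    have hz : ∑ j, ∑ k, Q j k * Qd k k = 0 := by
      rw [Finset.sum_comm]
      apply Finset.sum_eq_zero
      intro k _
      rw [← Finset.sum_mul, hQcol k, zero_mul]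
    rw [hz, mul_zero, zero_add, ← hn]
    field_simp
  have hkey : ∀ a, ∑ j, effRes Qd a j * nodeCurv G c Qd j
      = (∑ k, Qd k k * nodeCurv G c Qd k) + (∑ k, Qd k k) / n := by
    intro a
    have e1 : ∀ j, effRes Qd a j * nodeCurv G c Qd j
        = Qd a a * nodeCurv G c Qd j + Qd j j * nodeCurv G c Qd j
          - 2 * (Qd a j * nodeCurv G c Qd j) := by
      intro j; rw [hω a j]; ring
    rw [Finset.sum_congr rfl fun j _ => e1 j]
    rw [Finset.sum_sub_distrib, Finset.sum_add_distrib, ← Finset.mul_sum, hpsum, mul_one]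
    have e2 : ∑ j, Qd a j * nodeCurv G c Qd j
        = 1 / 2 * (Qd a a - (∑ k, Qd k k) / n) := by
      have e3 : ∀ j, Qd a j * nodeCurv G c Qd j
          = 1 / 2 * (Qd a j * ∑ k, Q j k * Qd k k) + Qd a j * (1 / n) := by
        intro j; rw [hp j]; ring
      rw [Finset.sum_congr rfl fun j _ => e3 j]
      rw [Finset.sum_add_distrib, ← Finset.sum_mul, hQdrow a, zero_mul, add_zero,
        ← Finset.mul_sum]
      have e4 : ∑ j, Qd a j * ∑ k, Q j k * Qd k k = Qd a a - (∑ k, Qd k k) / n := by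
        have e5 : ∀ j, Qd a j * ∑ k, Q j k * Qd k k = ∑ k, Qd a j * Q j k * Qd k k := by
          intro j
          rw [Finset.mul_sum]
          exact Finset.sum_congr rfl fun k _ => by ring
        rw [Finset.sum_congr rfl fun j _ => e5 j, Finset.sum_comm]
        have e6 : ∀ k, ∑ j, Qd a j * Q j k * Qd k k
            = ((if a = k then 1 else 0) - 1 / n) * Qd k k := by
          intro k
          rw [← Finset.sum_mul]
          congr 1
          rw [show ∑ j, Qd a j * Q j k = (Qd * Q) a k from (Matrix.mul_apply).symm,
            hPentry a k]
        rw [Finset.sum_congr rfl fun k _ => e6 k]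
        simp only [sub_mul, ite_mul, one_mul, zero_mul, Finset.sum_sub_distrib,
          Finset.sum_ite_eq, Finset.mem_univ, if_true]
        rw [show ∑ k, 1 / n * Qd k k = 1 / n * ∑ k, Qd k k from (Finset.mul_sum _ _ _).symm]
        ring
      rw [e4]
    rw [show ∑ j, 2 * (Qd a j * nodeCurv G c Qd j)
        = 2 * ∑ j, Qd a j * nodeCurv G c Qd j from (Finset.mul_sum _ _ _).symm, e2]
    ring
  intro x
  have hres : ∀ a, (resMatrix Qd *ᵥ fun i => nodeCurv G c Qd i) a
      = ∑ j, effRes Qd a j * nodeCurv G c Qd j := by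
    intro a
    simp [resMatrix, mulVec, dotProduct]
  have hdot : (fun i => nodeCurv G c Qd i) ⬝ᵥ (resMatrix Qd *ᵥ fun i => nodeCurv G c Qd i)
      = (∑ k, Qd k k * nodeCurv G c Qd k) + (∑ k, Qd k k) / n := by
    simp only [dotProduct]
    have : ∀ a, nodeCurv G c Qd a * ((resMatrix Qd *ᵥ fun i => nodeCurv G c Qd i) a)
        = nodeCurv G c Qd a * ((∑ k, Qd k k * nodeCurv G c Qd k) + (∑ k, Qd k k) / n) := by
      intro a; rw [hres a, hkey a]
    rw [Finset.sum_congr rfl fun a _ => this a, ← Finset.sum_mul, hpsum, one_mul]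
  rw [hres x, hkey x, hdot]
  ring
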